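/- Let p be a prime and let Γ = ℤ_p^r be the additive topological group (product topology), with r > 1. Then lim_H e(Γ, H) = p^∞, where the limit is over open subgroups H of Γ: precisely, for every positive integer k there exists an open subgroup H₀ of Γ such that for every open subgroup H ⊆ H₀, the quotient Γ/H is finite and p^k · (exponent of Γ/H) divides the index [Γ : H]. -/

import Mathlib

/-!
Take `H₀ = p^k Γ`, the kernel of reduction `Γ → (ℤ/p^k)^r`. For an open `H ≤ H₀` the finite
group `Q = Γ/H` surjects onto `V = (ℤ/p^k)^r`. If `g ∈ Q` has order `exp Q`, the image of `⟨g⟩`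
in `V` is cyclic of order dividing `p^k`, and its index in `V` divides `[Q : ⟨g⟩]`. Hence
`exp Q · p^(kr) ∣ p^k · [Γ : H]`, and since `r ≥ 2` this leaves `p^k · exp Q ∣ [Γ : H]`.
-/

open Function PadicInt

theorem AddMonoidHom.exponent_mul_card_dvd_of_surjective {Q V : Type*} [AddCommGroup Q]
    [AddGroup V] {φ : Q →+ V} (hφ : Surjective φ) :
    AddMonoid.exponent Q * Nat.card V ∣ AddMonoid.exponent V * Nat.card Q := by
  cases finite_or_infinite Q
  swap
  · simp
  obtain ⟨g, hg⟩ :=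
    AddMonoid.exists_addOrderOf_eq_exponent (AddMonoid.ExponentExists.of_finite (G := Q))
  set C := AddSubgroup.zmultiples g
  have hindex : (C.map φ).index ∣ C.index := by
    rw [← AddSubgroup.index_comap_of_surjective _ hφ]
    exact AddSubgroup.index_dvd_of_le (AddSubgroup.le_comap_map φ C)
  have hcard : Nat.card (C.map φ) ∣ AddMonoid.exponent V := by
    rw [AddMonoidHom.map_zmultiples, Nat.card_zmultiples]
    exact AddMonoid.addOrder_dvd_exponent _
  calc AddMonoid.exponent Q * Nat.card V
      = Nat.card C * (Nat.card (C.map φ) * (C.map φ).index) := by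
        rw [AddSubgroup.card_mul_index, Nat.card_zmultiples, hg]
    _ ∣ AddMonoid.exponent V * (Nat.card C * C.index) := by
        rw [mul_left_comm]
        exact mul_dvd_mul hcard (mul_dvd_mul_left _ hindex)
    _ = AddMonoid.exponent V * Nat.card Q := by rw [AddSubgroup.card_mul_index]

theorem ZMod.exponent_pi_dvd (ι : Type*) (n : ℕ) : AddMonoid.exponent (ι → ZMod n) ∣ n :=
  AddMonoid.exponent_dvd_of_forall_nsmul_eq_zero fun v => funext fun i => by
    simp [nsmul_eq_mul]

namespace PadicInt

variable {p : ℕ} [Fact p.Prime]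

theorem continuous_toZModPow (n : ℕ) : Continuous (toZModPow (p := p) n) := by
  refine continuous_of_continuousAt_zero (toZModPow (p := p) n).toAddMonoidHom ?_
  rw [ContinuousAt, map_zero, nhds_discrete (ZMod (p ^ n)), Filter.tendsto_pure]
  have hpos : (0 : ℝ) < (p : ℝ) ^ (-n : ℤ) :=
    zpow_pos (Nat.cast_pos.2 (Fact.out : p.Prime).pos) _
  filter_upwards [Metric.closedBall_mem_nhds (0 : ℤ_[p]) hpos] with x hx
  rwa [mem_closedBall_zero_iff, norm_le_pow_iff_mem_span_pow, ← ker_toZModPow] at hx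

variable (ι : Type*)

noncomputable def toZModPowPi (n : ℕ) : (ι → ℤ_[p]) →+ (ι → ZMod (p ^ n)) :=
  (toZModPow n).toAddMonoidHom.compLeft ι

theorem toZModPowPi_surjective (n : ℕ) : Surjective (toZModPowPi (p := p) ι n) :=
  (ZMod.ringHom_surjective (toZModPow n)).comp_left

theorem isOpen_ker_toZModPowPi [Finite ι] (n : ℕ) :
    IsOpen ((toZModPowPi (p := p) ι n).ker : Set (ι → ℤ_[p])) :=
  (isOpen_discrete {0}).preimage
    (continuous_pi fun i => (continuous_toZModPow n).comp (continuous_apply i))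

end PadicInt

theorem e_tendsto_infinity_of_rank_gt_one
    (p : ℕ) [Fact p.Prime] (r : ℕ) (hr : 1 < r) :
    ∀ k : ℕ, ∃ H₀ : AddSubgroup (Fin r → ℤ_[p]), IsOpen (H₀ : Set (Fin r → ℤ_[p])) ∧
      ∀ H : AddSubgroup (Fin r → ℤ_[p]), IsOpen (H : Set (Fin r → ℤ_[p])) → H ≤ H₀ →
        Finite ((Fin r → ℤ_[p]) ⧸ H) ∧
        p ^ k * AddMonoid.exponent ((Fin r → ℤ_[p]) ⧸ H) ∣ H.index := by
  intro k
  refine ⟨(toZModPowPi (Fin r) k).ker, isOpen_ker_toZModPowPi (Fin r) k, fun H hH hle => ?_⟩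
  refine ⟨AddSubgroup.quotient_finite_of_isOpen H hH, ?_⟩
  have hφ : Surjective (QuotientAddGroup.lift H (toZModPowPi (Fin r) k) hle) :=
    QuotientAddGroup.lift_surjective_of_surjective _ _ (toZModPowPi_surjective (Fin r) k) hle
  have hcard : Nat.card (Fin r → ZMod (p ^ k)) = p ^ (k * r) := by simp [pow_mul]
  have hexp := AddMonoidHom.exponent_mul_card_dvd_of_surjective hφ
  rw [hcard] at hexp
  have hsq : p ^ k * p ^ k ∣ p ^ (k * r) := by
    rw [← pow_add]
    exact pow_dvd_pow p (by nlinarith)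
  set e := AddMonoid.exponent ((Fin r → ℤ_[p]) ⧸ H)
  refine Nat.dvd_of_mul_dvd_mul_left (pow_pos (Fact.out : p.Prime).pos k) ?_
  calc p ^ k * (p ^ k * e) = e * (p ^ k * p ^ k) := by ring
    _ ∣ e * p ^ (k * r) := mul_dvd_mul_left e hsq
    _ ∣ AddMonoid.exponent (Fin r → ZMod (p ^ k)) * H.index := hexp
    _ ∣ p ^ k * H.index := mul_dvd_mul_right (ZMod.exponent_pi_dvd _ _) _
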